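/- arXiv:1906.07394 — 2 statements merged into one kernel-verified Lean document; each statement's English description precedes it below -/
import Mathlib

section
/- Let G be a connected finite simple graph on n ≥ 2 vertices that is not complete, and let k = ⌈log₂(diam(G))⌉. Then NM(G^{k}) (where G^{k} is the 2^{k-1}-th distance power of G) has no zero entries, and k is the smallest positive integer with this property. -/
/-!
In the distance power `H = distPow G r` of a connected graph, the entries of `NM H` can only
vanish for trivial reasons: a diagonal entry vanishes iff the vertex is isolated in `H`, an entry
at an edge never vanishes (it counts `i ∈ N_H(j) \ N_H(i)`), and an entry at a non-edge `ij`
vanishes iff `i` and `j` have no common `H`-neighbour. A non-edge means `r < d(i, j)`, and a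
common neighbour exists iff `d(i, j) ≤ 2r`: take the vertex at distance `r` from `i` on a
geodesic. Hence `NM (distPow G r)` has no zero entry iff `diam G ≤ 2r`, and for `r = 2^(m-1)`
this reads `⌈log₂ (diam G)⌉ ≤ m`.
-/

open Classical in
/-- The neighbourhood matrix `NM(G)` of a finite simple graph. -/
noncomputable def NM {V : Type*} [Fintype V] (G : SimpleGraph V) : Matrix V V ℤ :=
  fun i j =>
    if i = j then -((G.neighborSet i).ncard : ℤ)
    else if G.Adj i j then ((G.neighborSet j \ G.neighborSet i).ncard : ℤ)
    else -(((G.neighborSet i ∩ G.neighborSet j).ncard : ℤ))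

/-- The `r`-th distance power of `G`: joins distinct vertices at distance `≤ r`. -/
def distPow {V : Type*} (G : SimpleGraph V) (r : ℕ) : SimpleGraph V where
  Adj i j := i ≠ j ∧ G.Reachable i j ∧ G.dist i j ≤ r
  symm := by
    constructor
    intro i j ⟨h1, h2, h3⟩
    exact ⟨h1.symm, h2.symm, by rwa [SimpleGraph.dist_comm]⟩
  loopless := ⟨fun i h => h.1 rfl⟩

namespace SimpleGraph

variable {V : Type*} {G : SimpleGraph V} {u v : V}

lemma Reachable.exists_reachable_dist_le_dist_le_sub (h : G.Reachable u v) (m : ℕ) :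
    ∃ w, G.Reachable u w ∧ G.dist u w ≤ m ∧ G.dist w v ≤ G.dist u v - m := by
  obtain ⟨p, hp⟩ := h.exists_walk_length_eq_dist
  refine ⟨p.getVert m, ⟨p.take m⟩, ?_, ?_⟩
  · calc G.dist u (p.getVert m) ≤ (p.take m).length := dist_le _
      _ ≤ m := by simp [Walk.take_length]
  · calc G.dist (p.getVert m) v ≤ (p.drop m).length := dist_le _
      _ = G.dist u v - m := by rw [Walk.drop_length, hp]

end SimpleGraph

section NM

variable {V : Type*} [Fintype V] {H : SimpleGraph V} {i j : V}

lemma NM_self_ne_zero_iff : NM H i i ≠ 0 ↔ (H.neighborSet i).Nonempty := by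
  simp only [NM, if_pos, ne_eq, neg_eq_zero, Nat.cast_eq_zero]
  rw [← ne_eq, ← Nat.pos_iff_ne_zero, Set.ncard_pos]

lemma NM_ne_zero_of_adj (h : H.Adj i j) : NM H i j ≠ 0 := by
  have hi : i ∈ H.neighborSet j \ H.neighborSet i := ⟨h.symm, H.irrefl⟩
  simpa [NM, h.ne, h] using Set.ncard_ne_zero_of_mem hi

lemma NM_ne_zero_iff_of_not_adj (hij : i ≠ j) (h : ¬H.Adj i j) :
    NM H i j ≠ 0 ↔ (H.neighborSet i ∩ H.neighborSet j).Nonempty := by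
  simp only [NM, if_neg hij, if_neg h, ne_eq, neg_eq_zero, Nat.cast_eq_zero]
  rw [← ne_eq, ← Nat.pos_iff_ne_zero, Set.ncard_pos]

end NM

section distPow

variable {V : Type*} {G : SimpleGraph V} {r : ℕ}

lemma distPow_neighborSet_nonempty [Nontrivial V] (hG : G.Preconnected) (hr : 0 < r) (i : V) :
    ((distPow G r).neighborSet i).Nonempty := by
  obtain ⟨j, hij⟩ := hG.exists_adj_of_nontrivial i
  exact ⟨j, hij.ne, hij.reachable, by rw [SimpleGraph.dist_eq_one_iff_adj.mpr hij]; omega⟩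

lemma distPow_inter_neighborSet_nonempty_iff {i j : V} (h : r < G.dist i j) :
    ((distPow G r).neighborSet i ∩ (distPow G r).neighborSet j).Nonempty ↔
      G.dist i j ≤ 2 * r := by
  constructor
  · rintro ⟨w, ⟨-, hiw, hdiw⟩, ⟨-, -, hdjw⟩⟩
    have := hiw.dist_triangle_left j
    rw [SimpleGraph.dist_comm (u := j)] at hdjw
    omega
  · intro h2r
    have hij : G.Reachable i j := .of_dist_ne_zero (by omega)
    obtain ⟨w, hiw, hdiw, hdwj⟩ := hij.exists_reachable_dist_le_dist_le_sub r
    have hwi : i ≠ w := by rintro rfl; omega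
    have hwj : j ≠ w := by rintro rfl; omega
    exact ⟨w, ⟨hwi, hiw, hdiw⟩, ⟨hwj, (hiw.symm.trans hij).symm, by
      rw [SimpleGraph.dist_comm]; omega⟩⟩

lemma NM_distPow_ne_zero_iff [Fintype V] [Nontrivial V] (hG : G.Connected) (hr : 0 < r) :
    (∀ i j, NM (distPow G r) i j ≠ 0) ↔ G.diam ≤ 2 * r := by
  constructor
  · intro hNM
    obtain ⟨u, v, huv⟩ := G.exists_dist_eq_diam
    rw [← huv]
    rcases le_or_gt (G.dist u v) r with hle | hr_lt
    · omega
    have hne : u ≠ v := by rintro rfl; simp at hr_lt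
    have hadj : ¬(distPow G r).Adj u v := fun h => by have := h.2.2; omega
    exact (distPow_inter_neighborSet_nonempty_iff hr_lt).mp
      ((NM_ne_zero_iff_of_not_adj hne hadj).mp (hNM u v))
  · intro hdiam i j
    by_cases hij : i = j
    · subst hij
      exact NM_self_ne_zero_iff.mpr (distPow_neighborSet_nonempty hG.preconnected hr i)
    by_cases hadj : (distPow G r).Adj i j
    · exact NM_ne_zero_of_adj hadj
    have hr_lt : r < G.dist i j := by
      by_contra! hle
      exact hadj ⟨hij, hG i j, hle⟩
    have hdist : G.dist i j ≤ G.diam :=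
      SimpleGraph.dist_le_diam (SimpleGraph.connected_iff_ediam_ne_top.mp hG)
    exact (NM_ne_zero_iff_of_not_adj hij hadj).mpr
      ((distPow_inter_neighborSet_nonempty_iff hr_lt).mpr (hdist.trans hdiam))

end distPow

theorem iteration_number_eq_clog_diam_general {n : ℕ} (G : SimpleGraph (Fin n))
    (hn : 2 ≤ n) (hconn : G.Connected)
    (k : ℕ) (hk : k = Nat.clog 2 G.diam) :
    (∀ i j : Fin n, NM (distPow G (2 ^ (k - 1))) i j ≠ 0) ∧
    (∀ m : ℕ, 0 < m →
      (∀ i j : Fin n, NM (distPow G (2 ^ (m - 1))) i j ≠ 0) → k ≤ m) := by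
  have : Nontrivial (Fin n) := Fin.nontrivial_iff_two_le.mpr hn
  refine ⟨(NM_distPow_ne_zero_iff hconn (by positivity)).mpr ?_, fun m hm hNM => ?_⟩
  · -- `k - 1` truncates, so for `k = 0` the radius is `1` rather than `1 / 2`.
    calc G.diam ≤ 2 ^ k := hk ▸ Nat.le_pow_clog one_lt_two _
      _ ≤ 2 * 2 ^ (k - 1) := by
        rw [← pow_succ']; exact Nat.pow_le_pow_right two_pos (by omega)
  · have hdiam := (NM_distPow_ne_zero_iff hconn (by positivity)).mp hNM
    rw [← pow_succ', Nat.sub_add_cancel hm] at hdiam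
    exact hk ▸ (Nat.clog_le_iff_le_pow one_lt_two).mpr hdiam

theorem iteration_number_eq_clog_diam {n : ℕ} (G : SimpleGraph (Fin n))
    (hn : 2 ≤ n) (hconn : G.Connected) (hnc : G ≠ ⊤)
    (k : ℕ) (hk : k = Nat.clog 2 G.diam) :
    (∀ i j : Fin n, NM (distPow G (2 ^ (k - 1))) i j ≠ 0) ∧
    (∀ m : ℕ, 0 < m →
      (∀ i j : Fin n, NM (distPow G (2 ^ (m - 1))) i j ≠ 0) → k ≤ m) :=
  iteration_number_eq_clog_diam_general G hn hconn k hk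
end

section
/- A finite simple graph G on n ≥ 2 vertices is connected if and only if there exists a positive integer l such that NM(G^{l}) has no zero entries, where G^{l} denotes the 2^{l-1}-th distance power of G. -/
/-!
If `G` is connected, a distance power beyond the diameter is complete, and every entry of the
neighbourhood matrix of a complete graph on at least two vertices is nonzero. Conversely, a
nonzero off-diagonal entry of `NM(H)` means that `i` and `j` are adjacent in `H` or have a
common neighbour there, and adjacency in a distance power of `G` implies reachability in `G`.
-/

open SimpleGraph

section NM

variable {V : Type*} [Fintype V]

theorem NM_top_ne_zero [Nontrivial V] (i j : V) : NM (⊤ : SimpleGraph V) i j ≠ 0 := by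
  by_cases hij : i = j
  · subst hij
    obtain ⟨k, hk⟩ := exists_ne i
    rw [NM, if_pos rfl, neg_ne_zero, Nat.cast_ne_zero]
    exact (Set.ncard_pos (Set.toFinite _)).mpr ⟨k, hk.symm⟩ |>.ne'
  · have hi : i ∈ (⊤ : SimpleGraph V).neighborSet j \ (⊤ : SimpleGraph V).neighborSet i :=
      ⟨Ne.symm hij, (⊤ : SimpleGraph V).loopless.irrefl i⟩
    rw [NM, if_neg hij, if_pos ((top_adj i j).mpr hij), Nat.cast_ne_zero]
    exact (Set.ncard_pos (Set.toFinite _)).mpr ⟨i, hi⟩ |>.ne'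

theorem exists_common_neighbor_of_NM_ne_zero {H : SimpleGraph V} {i j : V} (hij : i ≠ j)
    (hadj : ¬H.Adj i j) (h : NM H i j ≠ 0) : ∃ k, H.Adj i k ∧ H.Adj j k := by
  rw [NM, if_neg hij, if_neg hadj, neg_ne_zero, Nat.cast_ne_zero] at h
  exact Set.nonempty_of_ncard_ne_zero h

end NM

namespace SimpleGraph

variable {V : Type*} {G : SimpleGraph V} {r : ℕ}

theorem Adj.reachable_of_distPow {i j : V} (h : (distPow G r).Adj i j) : G.Reachable i j :=
  h.2.1

theorem distPow_eq_top_of_diam_le [Finite V] (hG : G.Connected) (hr : G.diam ≤ r) :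
    distPow G r = ⊤ := by
  have : Nonempty V := hG.nonempty
  ext i j
  exact ⟨fun h => h.1, fun hij =>
    ⟨hij, hG i j, (dist_le_diam (connected_iff_ediam_ne_top.mp hG)).trans hr⟩⟩

theorem preconnected_of_NM_distPow_ne_zero [Fintype V] (h : ∀ i j, NM (distPow G r) i j ≠ 0) :
    G.Preconnected := by
  intro i j
  by_cases hij : i = j
  · exact hij ▸ Reachable.refl i
  by_cases hadj : (distPow G r).Adj i j
  · exact hadj.reachable_of_distPow
  obtain ⟨k, hik, hjk⟩ := exists_common_neighbor_of_NM_ne_zero hij hadj (h i j)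
  exact hik.reachable_of_distPow.trans hjk.reachable_of_distPow.symm

end SimpleGraph

theorem connected_iff_exists_nm_no_zero {n : ℕ} (G : SimpleGraph (Fin n))
    (hn : 2 ≤ n) :
    G.Connected ↔
      ∃ l : ℕ, 1 ≤ l ∧ ∀ i j : Fin n, NM (distPow G (2 ^ (l - 1))) i j ≠ 0 := by
  have : Nontrivial (Fin n) := Fin.nontrivial_iff_two_le.mpr hn
  constructor
  · intro hG
    refine ⟨G.diam + 1, Nat.le_add_left 1 _, fun i j => ?_⟩
    rw [Nat.add_sub_cancel, distPow_eq_top_of_diam_le hG (Nat.lt_two_pow_self).le]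
    exact NM_top_ne_zero i j
  · rintro ⟨l, -, h⟩
    exact ⟨preconnected_of_NM_distPow_ne_zero h⟩
end
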